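/- The function v(w) = (w²+4)·w/(2(w²-4)) on (2, ∞) attains its minimum at w = √(8+4√5), and the minimum value of 2v is √(22+10√5). -/
import Mathlib


noncomputable def vOf (w : ℝ) : ℝ := (w ^ 2 + 4) * w / (2 * (w ^ 2 - 4))

theorem stmt_18 :
    (∀ w : ℝ, 2 < w → vOf (Real.sqrt (8 + 4 * Real.sqrt 5)) ≤ vOf w) ∧
      2 * vOf (Real.sqrt (8 + 4 * Real.sqrt 5)) = Real.sqrt (22 + 10 * Real.sqrt 5) := by
  set a := Real.sqrt 5 with ha_def
  have ha : a ^ 2 = 5 := Real.sq_sqrt (by norm_num)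
  have ha0 : 0 ≤ a := Real.sqrt_nonneg _
  have ha2 : 2 < a := by nlinarith
  have ha3 : a < 3 := by nlinarith
  set w0 := Real.sqrt (8 + 4 * a) with hw0_def
  have hw2 : w0 ^ 2 = 8 + 4 * a := Real.sq_sqrt (by linarith)
  have hw0nn : 0 ≤ w0 := Real.sqrt_nonneg _
  have hw0 : 2 < w0 := by nlinarith
  have key : vOf w0 = (a + 1) * w0 / 4 := by
    unfold vOf
    rw [hw2]
    have hne : (2 : ℝ) * (8 + 4 * a - 4) ≠ 0 := by nlinarith
    rw [div_eq_div_iff hne (by norm_num)]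
    nlinarith [hw2, ha]
  constructor
  · intro w hw
    rw [key]
    unfold vOf
    have hd : 0 < 2 * (w ^ 2 - 4) := by nlinarith
    rw [div_le_div_iff₀ (by norm_num) hd]
    have hr : 0 ≤ w - (a - 3) * w0 / 2 := by nlinarith
    have hP : 0 ≤ (w - w0) ^ 2 * (w - (a - 3) * w0 / 2) :=
      mul_nonneg (sq_nonneg _) hr
    have hid : (w ^ 2 + 4) * w * 4 - (a + 1) * w0 * (2 * (w ^ 2 - 4)) =
        4 * ((w - w0) ^ 2 * (w - (a - 3) * w0 / 2)) := by
      linear_combination (-16 * w + 8 * w0) * ha +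
        (-4 * (a - 2) * w - 2 * (3 - a) * w0) * hw2
    linarith [hP, hid]
  · rw [key]
    have h1 : ((a + 1) * w0 / 2) ^ 2 = 22 + 10 * a := by nlinarith [hw2, ha]
    have h2 : 0 ≤ (a + 1) * w0 / 2 := by positivity
    rw [show (22 : ℝ) + 10 * a = ((a + 1) * w0 / 2) ^ 2 from h1.symm, Real.sqrt_sq h2]
    ring
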